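/- If a subgroup G ≤ Aut(T_𝔛) is spherically transitive and layered, then Rist_G(n) has finite index in G for every n; that is, every spherically transitive layered group is a branch group. -/

import Mathlib

namespace BranchPaper

universe u

/-- Vertices at level `n` of the rooted tree defined by the sequence of alphabets `X`:
strings `x₁ ⋯ x_n` with `x_{i+1} ∈ X i` (we index alphabets from `0`). -/
abbrev Vertex (X : ℕ → Type u) (n : ℕ) : Type u := ∀ i : Fin n, X (i : ℕ)

/-- The shifted sequence of alphabets `𝔛.σⁿ`. -/
abbrev shift (X : ℕ → Type u) (n : ℕ) : ℕ → Type u := fun k => X (n + k)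

variable {X : ℕ → Type u}

/-- Compatibility of a sequence of level permutations with truncation: this is precisely
the condition for the family to define an automorphism of the rooted tree. -/
def Compat (p : ∀ n, Equiv.Perm (Vertex X n)) : Prop :=
  ∀ (n : ℕ) (v : Vertex X (n + 1)), Fin.init (p (n + 1) v) = p n (Fin.init v)

/-- The automorphism group of the rooted tree `T_X`, realised as the subgroup of
`∏ₙ Sym(L(n))` of families of layer permutations compatible with truncation. -/
def treeAutGroup (X : ℕ → Type u) : Subgroup (∀ n, Equiv.Perm (Vertex X n)) where
  carrier := {p | Compat p}
  one_mem' := fun _ _ => rfl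
  mul_mem' := by
    intro a b ha hb n v
    show Fin.init (a (n + 1) (b (n + 1) v)) = a n (b n (Fin.init v))
    rw [ha, hb]
  inv_mem' := by
    intro a ha n v
    apply (a n).injective
    show a n (Fin.init ((a (n + 1))⁻¹ v)) = a n ((a n)⁻¹ (Fin.init v))
    rw [← ha n ((a (n + 1))⁻¹ v)]
    simp only [Equiv.Perm.coe_inv, Equiv.apply_symm_apply]

/-- `Aut(T_X)`. -/
abbrev TreeAut (X : ℕ → Type u) := ↥(treeAutGroup X)

lemma mem_treeAutGroup {p : ∀ n, Equiv.Perm (Vertex X n)} : p ∈ treeAutGroup X ↔ Compat p :=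
  Iff.rfl

lemma TreeAut.compat (g : TreeAut X) : Compat (g.1) := g.2

/-- The first `n` letters of a vertex of length `n + m`. -/
def front {n m : ℕ} (w : Vertex X (n + m)) : Vertex X n := fun i => w (Fin.castAdd m i)

/-- The last `m` letters of a vertex of length `n + m`, as a vertex of the shifted tree. -/
def back {n m : ℕ} (w : Vertex X (n + m)) : Vertex (shift X n) m := fun i => w (Fin.natAdd n i)

/-- Concatenation of a vertex of `T_X` with a vertex of the shifted tree. -/
def append {n m : ℕ} (v : Vertex X n) (w : Vertex (shift X n) m) : Vertex X (n + m) :=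
  Fin.addCases (motive := fun i => X (i : ℕ)) v w

@[simp] lemma front_append {n m : ℕ} (v : Vertex X n) (w : Vertex (shift X n) m) :
    front (append v w) = v := by
  funext i
  show Fin.addCases (motive := fun i => X (i : ℕ)) v w (Fin.castAdd m i) = v i
  exact Fin.addCases_left i

@[simp] lemma back_append {n m : ℕ} (v : Vertex X n) (w : Vertex (shift X n) m) :
    back (append v w) = w := by
  funext i
  show Fin.addCases (motive := fun i => X (i : ℕ)) v w (Fin.natAdd n i) = w i
  exact Fin.addCases_right i

@[simp] lemma append_front_back {n m : ℕ} (w : Vertex X (n + m)) :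
    append (front w) (back w) = w := by
  funext i
  induction i using Fin.addCases with
  | left i =>
      show Fin.addCases (motive := fun i => X (i : ℕ)) (front w) (back w) (Fin.castAdd m i)
        = w (Fin.castAdd m i)
      rw [Fin.addCases_left]
      rfl
  | right i =>
      show Fin.addCases (motive := fun i => X (i : ℕ)) (front w) (back w) (Fin.natAdd n i)
        = w (Fin.natAdd n i)
      rw [Fin.addCases_right]
      rfl

lemma init_append {n m : ℕ} (v : Vertex X n) (w : Vertex (shift X n) (m + 1)) :
    Fin.init (n := n + m) (append (n := n) (m := m + 1) v w) = append v (Fin.init w) := by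
  funext i
  induction i using Fin.addCases with
  | left i =>
      have h1 : Fin.addCases (motive := fun j => X (j : ℕ)) v w (Fin.castAdd (m + 1) i)
          = v i := Fin.addCases_left i
      have h2 : Fin.addCases (motive := fun j => X (j : ℕ)) v (Fin.init w) (Fin.castAdd m i)
          = v i := Fin.addCases_left i
      exact h1.trans h2.symm
  | right i =>
      have h1 : Fin.addCases (motive := fun j => X (j : ℕ)) v w (Fin.natAdd n i.castSucc)
          = w i.castSucc := Fin.addCases_right i.castSucc
      have h2 : Fin.addCases (motive := fun j => X (j : ℕ)) v (Fin.init w) (Fin.natAdd n i)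
          = Fin.init w i := Fin.addCases_right i
      exact h1.trans h2.symm

lemma front_act (g : TreeAut X) (n : ℕ) :
    ∀ (m : ℕ) (w : Vertex X (n + m)), front (g.1 (n + m) w) = g.1 n (front w) := by
  intro m
  induction m with
  | zero => intro w; rfl
  | succ m ih =>
      intro w
      calc front (g.1 (n + (m + 1)) w)
          = front (m := m) (Fin.init (n := n + m) (g.1 (n + m + 1) w)) := rfl
        _ = front (m := m) (g.1 (n + m) (Fin.init (n := n + m) w)) := by
              rw [g.compat (n + m) w]
        _ = g.1 n (front (Fin.init (n := n + m) w)) := ih _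
        _ = g.1 n (front w) := rfl

lemma coe_inv_apply (g : TreeAut X) (n : ℕ) (v : Vertex X n) :
    (g⁻¹).1 n v = (g.1 n)⁻¹ v := rfl

/-- The section `g|_v` of a tree automorphism at a vertex `v`, an automorphism of the
shifted tree, characterised by `g (v * w) = g v * (g|_v) w`. -/
def sectionAt (g : TreeAut X) {n : ℕ} (v : Vertex X n) : TreeAut (shift X n) :=
  ⟨fun m =>
    { toFun := fun w => back (g.1 (n + m) (append v w))
      invFun := fun w => back ((g⁻¹).1 (n + m) (append (g.1 n v) w))
      left_inv := by
        intro w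
        have hfront : front (g.1 (n + m) (append v w)) = g.1 n v := by
          rw [front_act, front_append]
        have key := append_front_back (g.1 (n + m) (append v w))
        rw [hfront] at key
        show back ((g⁻¹).1 (n + m) (append (g.1 n v) (back (g.1 (n + m) (append v w))))) = w
        rw [key]
        have h2 : (g⁻¹).1 (n + m) (g.1 (n + m) (append v w)) = append v w := by
          show (g.1 (n + m))⁻¹ (g.1 (n + m) (append v w)) = append v w
          exact Equiv.symm_apply_apply _ _
        rw [h2, back_append]
      right_inv := by
        intro w
        have hfront : front ((g⁻¹).1 (n + m) (append (g.1 n v) w)) = v := by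
          rw [front_act, front_append]
          show (g.1 n)⁻¹ (g.1 n v) = v
          exact Equiv.symm_apply_apply _ _
        have key := append_front_back ((g⁻¹).1 (n + m) (append (g.1 n v) w))
        rw [hfront] at key
        show back (g.1 (n + m) (append v (back ((g⁻¹).1 (n + m) (append (g.1 n v) w))))) = w
        rw [key]
        have h2 : g.1 (n + m) ((g⁻¹).1 (n + m) (append (g.1 n v) w)) = append (g.1 n v) w := by
          show g.1 (n + m) ((g.1 (n + m))⁻¹ (append (g.1 n v) w)) = append (g.1 n v) w
          exact Equiv.apply_symm_apply _ _
        rw [h2, back_append] },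
   by
    intro m w
    have h1 : Fin.init (n := n + m) (g.1 (n + m + 1) (append (n := n) (m := m + 1) v w))
        = g.1 (n + m) (Fin.init (n := n + m) (append (n := n) (m := m + 1) v w)) :=
      g.compat (n + m) (append (n := n) (m := m + 1) v w)
    calc Fin.init (back (n := n) (m := m + 1)
            (g.1 (n + (m + 1)) (append (n := n) (m := m + 1) v w)))
        = back (m := m) (Fin.init (n := n + m)
            (g.1 (n + m + 1) (append (n := n) (m := m + 1) v w))) := rfl
      _ = back (m := m) (g.1 (n + m)
            (Fin.init (n := n + m) (append (n := n) (m := m + 1) v w))) := by rw [h1]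
      _ = back (g.1 (n + m) (append v (Fin.init w))) := by rw [init_append v w]⟩

/-- An automorphism is finitary if all sections at some level are trivial. -/
def Finitary (g : TreeAut X) : Prop := ∃ n : ℕ, ∀ v : Vertex X n, sectionAt g v = 1

/-- `v` is a prefix of `w`. -/
def IsPrefixOf {n k : ℕ} (v : Vertex X n) (w : Vertex X k) : Prop :=
  ∃ h : n ≤ k, ∀ i : Fin n, w (Fin.castLE h i) = v i

/-- `g` fixes every vertex which does not have `v` as a prefix. -/
def FixesOutside (g : TreeAut X) {n : ℕ} (v : Vertex X n) : Prop :=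
  ∀ (k : ℕ) (w : Vertex X k), ¬ IsPrefixOf v w → g.1 k w = w

/-- A group of tree automorphisms acts spherically transitively if it acts transitively
on every layer. -/
def SphericallyTransitive (G : Subgroup (TreeAut X)) : Prop :=
  ∀ (n : ℕ) (v w : Vertex X n), ∃ g ∈ G, g.1 n v = w

/-- A group of tree automorphisms is layered if for every `g ∈ G` and every vertex `v`,
the insertion `ins_v (g|_v)` (the unique automorphism fixing everything outside the
subtree at `v` and with section `g|_v` at `v`) again belongs to `G`. -/
def Layered (G : Subgroup (TreeAut X)) : Prop :=
  ∀ g ∈ G, ∀ (n : ℕ) (v : Vertex X n),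
    ∃ h : TreeAut X, h ∈ G ∧ FixesOutside h v ∧ sectionAt h v = sectionAt g v

/-- The rigid vertex stabiliser of `v` in `G`. -/
def rist (G : Subgroup (TreeAut X)) {n : ℕ} (v : Vertex X n) : Subgroup (TreeAut X) where
  carrier := {g | g ∈ G ∧ FixesOutside g v}
  one_mem' := ⟨G.one_mem, fun _ _ _ => rfl⟩
  mul_mem' := by
    rintro a b ⟨haG, ha⟩ ⟨hbG, hb⟩
    refine ⟨G.mul_mem haG hbG, fun k w hw => ?_⟩
    show a.1 k (b.1 k w) = w
    rw [hb k w hw, ha k w hw]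
  inv_mem' := by
    rintro a ⟨haG, ha⟩
    refine ⟨G.inv_mem haG, fun k w hw => ?_⟩
    apply (a.1 k).injective
    show a.1 k ((a.1 k)⁻¹ w) = a.1 k w
    simp only [Equiv.Perm.coe_inv, Equiv.apply_symm_apply]
    rw [ha k w hw]

/-- The rigid layer stabiliser `Rist_G(n)`, the subgroup generated by the rigid vertex
stabilisers of the vertices in layer `n`. -/
def RistL (G : Subgroup (TreeAut X)) (n : ℕ) : Subgroup (TreeAut X) :=
  Subgroup.closure (⋃ v : Vertex X n, (rist G v : Set (TreeAut X)))

/-- A ray in the rooted tree. -/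
def IsRay (u : ∀ n, Vertex X n) : Prop := ∀ n, Fin.init (u (n + 1)) = u n

/-- A `𝔲`-generalised spinal element: all sections away from the ray are finitary. -/
def GeneralisedSpinal (u : ∀ n, Vertex X n) (g : TreeAut X) : Prop :=
  ∀ (n : ℕ) (v : Vertex X n), v ≠ u n → Finitary (sectionAt g v)

section Portrait

/-- The action on layers induced by a portrait (a labelling of the vertices by
permutations of the corresponding alphabets). -/
def portraitAct (L : ∀ n, Vertex X n → Equiv.Perm (X n)) : ∀ n, Vertex X n → Vertex X n
  | 0, v => v
  | (n + 1), v =>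
      Fin.snoc (portraitAct L n (Fin.init v)) (L n (Fin.init v) (v (Fin.last n)))

lemma portraitAct_injective (L : ∀ n, Vertex X n → Equiv.Perm (X n)) :
    ∀ n, Function.Injective (portraitAct L n)
  | 0 => fun _ _ h => h
  | (n + 1) => by
      intro a b h
      simp only [portraitAct] at h
      have hinit : Fin.init a = Fin.init b := by
        apply portraitAct_injective L n
        have := congrArg Fin.init h
        simpa [Fin.init_snoc] using this
      have hlast : a (Fin.last n) = b (Fin.last n) := by
        have h2 := congrFun h (Fin.last n)
        rw [Fin.snoc_last, Fin.snoc_last, hinit] at h2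
        exact (L n (Fin.init b)).injective h2
      calc a = Fin.snoc (Fin.init a) (a (Fin.last n)) := (Fin.snoc_init_self a).symm
        _ = Fin.snoc (Fin.init b) (b (Fin.last n)) := by rw [hinit, hlast]
        _ = b := Fin.snoc_init_self b

/-- The tree automorphism determined by a portrait. -/
noncomputable def ofPortrait [∀ k, Finite (X k)] (L : ∀ n, Vertex X n → Equiv.Perm (X n)) :
    TreeAut X :=
  ⟨fun n => Equiv.ofBijective (portraitAct L n)
      (Finite.injective_iff_bijective.mp (portraitAct_injective L n)),
   by
    intro n v
    show Fin.init (portraitAct L (n + 1) v) = portraitAct L n (Fin.init v)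
    simp [portraitAct, Fin.init_snoc]⟩

end Portrait

section Construction

variable (S : ℕ → Type u)

/-- The spinal automorphism determined by a sequence `c` of group elements: it has the
rooted permutation induced by `c k` at the vertex `u_k x_{k+1}` and trivial label
everywhere else. -/
noncomputable def spinalAut [∀ k, Finite (X k)] [∀ n, Group (S n)]
    [∀ n, MulAction (S n) (X n)] (u : ∀ n, Vertex X n) (x : ∀ n, X n)
    (c : ∀ n, S (n + 1)) : TreeAut X :=
  ofPortrait (fun n => match n with
    | 0 => fun _ => 1
    | (k + 1) => fun v =>
        haveI := Classical.propDecidable (v = Fin.snoc (u k) (x k))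
        if v = Fin.snoc (u k) (x k) then MulAction.toPerm (c k) else 1)

/-- The rooted automorphism induced by an element acting on the first alphabet. -/
noncomputable def rootedAut (X : ℕ → Type u) [∀ k, Finite (X k)] {R : Type*} [Group R]
    [MulAction R (X 0)] (s : R) : TreeAut X :=
  ofPortrait (fun n => match n with
    | 0 => fun _ => MulAction.toPerm s
    | (_ + 1) => fun _ => 1)

/-- The group `Fin_𝔖(T)` of finitary automorphisms all of whose labels lie in the images
of the groups `S n` acting on the alphabets, described as a set. -/
def finSet (X : ℕ → Type u) (S : ℕ → Type u) [∀ n, Group (S n)]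
    [∀ n, MulAction (S n) (X n)] : Set (TreeAut X) :=
  {g | Finitary g ∧ ∀ (n : ℕ) (v : Vertex X n), ∃ s : S n, ∀ y : X n,
      g.1 (n + 1) (Fin.snoc v y) (Fin.last n) = s • y}

variable {G : Type u} [Group G]

/-- The branch group `Γ` of the construction. -/
noncomputable def gammaGroup [∀ k, Finite (X k)] [∀ n, Group (S n)]
    [∀ n, MulAction (S n) (X n)] (φ : G →* ∀ n, S (n + 1))
    (u : ∀ n, Vertex X n) (x : ∀ n, X n) : Subgroup (TreeAut X) :=
  Subgroup.closure
    (Set.range (fun s : S 0 => rootedAut X s) ∪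
     Set.range (fun g : G => spinalAut S u x (fun n => φ g n)))

/-- The subgroup `Δ(H) = ⟨Fin_𝔖(T) ∪ {s_h : h ∈ H}⟩`. -/
noncomputable def deltaGroup [∀ k, Finite (X k)] [∀ n, Group (S n)]
    [∀ n, MulAction (S n) (X n)] (φ : G →* ∀ n, S (n + 1))
    (u : ∀ n, Vertex X n) (x : ∀ n, X n) (H : Subgroup G) : Subgroup (TreeAut X) :=
  Subgroup.closure
    (finSet X S ∪ ((fun g : G => spinalAut S u x (fun n => φ g n)) '' (H : Set G)))

end Construction

section Aux

variable {X : ℕ → Type u}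

lemma aux_fixes_level (a : TreeAut X) [∀ i, Nonempty (X i)] {n : ℕ}
    (hn : ∀ v, a.1 n v = v) : ∀ k, k ≤ n → ∀ w : Vertex X k, a.1 k w = w := by
  intro k hk w
  obtain ⟨m, rfl⟩ := Nat.exists_eq_add_of_le hk
  obtain ⟨w'⟩ : Nonempty (Vertex (shift X k) m) := inferInstance
  have h := front_act a k m (append w w')
  rw [hn, front_append] at h
  exact h.symm

lemma aux_apply_append (a : TreeAut X) {n m : ℕ} (v : Vertex X n)
    (w : Vertex (shift X n) m) :
    a.1 (n + m) (append v w) = append (a.1 n v) ((sectionAt a v).1 m w) := by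
  have h1 : (sectionAt a v).1 m w = back (a.1 (n + m) (append v w)) := rfl
  have h2 : front (a.1 (n + m) (append v w)) = a.1 n v := by
    rw [front_act, front_append]
  rw [h1, ← h2, append_front_back]

lemma aux_not_prefix_of_ne {n m : ℕ} (v v' : Vertex X n) (w : Vertex (shift X n) m)
    (hne : v' ≠ v) : ¬ IsPrefixOf v (append v' w) := by
  rintro ⟨hle, hi⟩
  apply hne
  funext i
  have h2 : append v' w (Fin.castAdd m i) = v' i := Fin.addCases_left i
  exact h2.symm.trans (hi i)

lemma aux_fix_level_self {n : ℕ} (a : TreeAut X) (v : Vertex X n)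
    (ha : FixesOutside a v) : ∀ w, a.1 n w = w := by
  have hfix : ∀ w : Vertex X n, w ≠ v → a.1 n w = w := by
    intro w hw
    apply ha
    rintro ⟨hle, hi⟩
    apply hw
    funext i
    exact hi i
  intro w
  by_cases hw : w = v
  · subst hw
    by_contra hne
    have h2 : a.1 n (a.1 n w) = a.1 n w := hfix _ hne
    exact hne ((a.1 n).injective h2)
  · exact hfix w hw

end Aux

/-- Every spherically transitive layered group is a branch group: the rigid layer
stabilisers have finite index. -/
theorem statement12 (X : ℕ → Type) [∀ n, Finite (X n)] (hX2 : ∀ n, 2 ≤ Nat.card (X n))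
    (G : Subgroup (TreeAut X)) (h1 : SphericallyTransitive G) (h2 : Layered G) :
    ∀ n, (RistL G n).relIndex G ≠ 0 := by
  intro n
  classical
  haveI : ∀ i, Nonempty (X i) := fun i => by
    have h := hX2 i
    have hpos : 0 < Nat.card (X i) := by omega
    exact (Nat.card_pos_iff.mp hpos).1
  haveI : Fintype (Vertex X n) := Fintype.ofFinite _
  set φ : TreeAut X →* Equiv.Perm (Vertex X n) :=
    (Pi.evalMonoidHom (fun k => Equiv.Perm (Vertex X k)) n).comp (treeAutGroup X).subtype
    with hφdef
  set ψ := φ.comp G.subtype with hψdef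
  have hmul : ∀ (x y : TreeAut X) (k : ℕ) (z : Vertex X k),
      (x * y).1 k z = x.1 k (y.1 k z) := fun _ _ _ _ => rfl
  have hker : ψ.ker ≤ (RistL G n).subgroupOf G := by
    intro g hg
    set b : TreeAut X := (g : TreeAut X) with hbdef
    have ha1 : b.1 n = 1 := MonoidHom.mem_ker.mp hg
    have ha1' : ∀ v, b.1 n v = v := fun v => by rw [ha1]; rfl
    choose hfun hmem hfix hsec using h2 b g.2 n
    -- each hfun v fixes layer n pointwise
    have hfun_n : ∀ v w, (hfun v).1 n w = w := fun v => aux_fix_level_self _ v (hfix v)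
    -- section computation for hfun v at its own vertex
    have hfun_app : ∀ (v : Vertex X n) (m : ℕ) (w : Vertex (shift X n) m),
        (hfun v).1 (n + m) (append v w) = append v ((sectionAt b v).1 m w) := by
      intro v m w
      rw [aux_apply_append, hfun_n, hsec]
    -- hfun v fixes deep vertices away from v
    have hfun_off : ∀ (v v' : Vertex X n) (m : ℕ) (w : Vertex (shift X n) m), v' ≠ v →
        (hfun v).1 (n + m) (append v' w) = append v' w := by
      intro v v' m w hne
      exact hfix v (n + m) (append v' w) (aux_not_prefix_of_ne v v' w hne)
    -- product computations
    have key : ∀ (l : List (Vertex X n)), l.Nodup → ∀ (m : ℕ) (v : Vertex X n)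
        (w : Vertex (shift X n) m),
        ((l.map hfun).prod).1 (n + m) (append v w) =
          if v ∈ l then append v ((sectionAt b v).1 m w) else append v w := by
      intro l
      induction l with
      | nil =>
          intro _ m v w
          rw [if_neg List.not_mem_nil]
          rfl
      | cons c l' ih =>
          intro hnd m v w
          obtain ⟨hc, hnd'⟩ := List.nodup_cons.mp hnd
          rw [List.map_cons, List.prod_cons, hmul, ih hnd']
          by_cases hvc : v = c
          · subst hvc
            rw [if_neg hc, if_pos List.mem_cons_self, hfun_app]
          · by_cases hvF : v ∈ l'
            · rw [if_pos hvF, if_pos (List.mem_cons_of_mem c hvF),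
                hfun_off c v _ _ hvc]
            · rw [if_neg hvF, if_neg (by simp [hvc, hvF]), hfun_off c v _ _ hvc]
    have key_n : ∀ (l : List (Vertex X n)) (v : Vertex X n),
        ((l.map hfun).prod).1 n v = v := by
      intro l
      induction l with
      | nil => intro v; rfl
      | cons c l' ih =>
          intro v
          rw [List.map_cons, List.prod_cons, hmul, ih, hfun_n]
    set L : List (Vertex X n) := Finset.univ.toList with hLdef
    set Q : TreeAut X := (L.map hfun).prod with hQdef
    have hQmem : Q ∈ RistL G n := by
      apply Subgroup.list_prod_mem
      intro x hx
      rcases List.mem_map.mp hx with ⟨v, _, rfl⟩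
      apply Subgroup.subset_closure
      exact Set.mem_iUnion.mpr ⟨v, ⟨hmem v, hfix v⟩⟩
    have hbQ : b = Q := by
      apply Subtype.ext
      funext k
      apply Equiv.ext
      intro w
      rcases le_or_gt n k with hk | hk
      · obtain ⟨m, rfl⟩ := Nat.exists_eq_add_of_le hk
        have hw := append_front_back w
        rw [← hw]
        rw [aux_apply_append, ha1']
        have hk2 := key L Finset.univ.nodup_toList m (front w) (back w)
        rw [if_pos (by simp [hLdef])] at hk2
        exact hk2.symm
      · have hb := aux_fixes_level b ha1' k (le_of_lt hk) w
        have hq := aux_fixes_level Q (key_n L) k (le_of_lt hk) w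
        rw [hb, hq]
    rw [Subgroup.mem_subgroupOf]
    show b ∈ RistL G n
    rw [hbQ]
    exact hQmem
  have hfin : ψ.ker.index ≠ 0 := by
    rw [Subgroup.index_ker]
    haveI : Finite (Equiv.Perm (Vertex X n)) := inferInstance
    exact Nat.card_pos.ne'
  have hdvd := Subgroup.index_dvd_of_le hker
  intro h0
  rw [Subgroup.relIndex] at h0
  rw [h0] at hdvd
  exact hfin (Nat.eq_zero_of_zero_dvd hdvd)

end BranchPaper
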